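/- arXiv:1504.04715 — 7 statements merged into one kernel-verified Lean document; each statement's English description precedes it below -/
import Mathlib

section
/- For all word relations ρ, σ over Σ: ED_ρ ⊆ ED_σ if and only if every pair (x, y) ∈ σ ∪ σ⁻¹ with x ≠ y belongs to ρ ∪ ρ⁻¹. (Lemma 3, with the containment of relations restricted to off-diagonal pairs, which is the precise form of the equivalence.) -/
/-- A language `L` is error-detecting for the word relation `ρ`:
for every `w ∈ L`, `ρ(w) ∩ (L \ {w}) = ∅`. -/
def ErrorDetecting {A : Type*} (ρ : Set (List A × List A)) (L : Set (List A)) : Prop :=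
  ∀ w ∈ L, {v | (w, v) ∈ ρ} ∩ (L \ {w}) = ∅

/-- The inverse of a word relation. -/
def RelInv {A : Type*} (ρ : Set (List A × List A)) : Set (List A × List A) :=
  {p | (p.2, p.1) ∈ ρ}

/-- `ED_ρ ⊆ ED_σ` iff every off-diagonal pair of `σ ∪ σ⁻¹` belongs to `ρ ∪ ρ⁻¹`. -/
theorem errorDetecting_subset_iff {A : Type*} (ρ σ : Set (List A × List A)) :
    {L : Set (List A) | ErrorDetecting ρ L} ⊆ {L : Set (List A) | ErrorDetecting σ L}
      ↔ ∀ x y : List A, (x, y) ∈ σ ∪ RelInv σ → x ≠ y → (x, y) ∈ ρ ∪ RelInv ρ := by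
  constructor
  · intro h x y hxy hne
    by_contra hnot
    simp only [Set.mem_union, RelInv, Set.mem_setOf_eq, not_or] at hnot
    -- L = {x, y} is error-detecting for ρ
    have hED : ErrorDetecting ρ {x, y} := by
      intro w hw
      ext v
      simp only [Set.mem_inter_iff, Set.mem_setOf_eq, Set.mem_diff, Set.mem_insert_iff,
        Set.mem_singleton_iff, Set.mem_empty_iff_false, iff_false, not_and, not_not]
      rcases hw with rfl | rfl
      · rintro hρ (rfl | rfl)
        · rfl
        · exact absurd hρ hnot.1
      · rintro hρ (rfl | rfl)
        · exact absurd hρ hnot.2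
        · rfl
    have hσ := h hED
    rcases hxy with hxy | hxy
    · have := hσ x (Set.mem_insert _ _)
      have : y ∈ ({v | (x, v) ∈ σ} ∩ ({x, y} \ {x}) : Set (List A)) := by
        refine ⟨hxy, Set.mem_insert_iff.mpr (Or.inr rfl), ?_⟩
        simpa using hne.symm
      rw [hσ x (Set.mem_insert _ _)] at this
      exact this
    · have : x ∈ ({v | (y, v) ∈ σ} ∩ ({x, y} \ {y}) : Set (List A)) := by
        refine ⟨hxy, Set.mem_insert _ _, ?_⟩
        simpa using hne
      rw [hσ y (Set.mem_insert_iff.mpr (Or.inr rfl))] at this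
      exact this
  · intro h L hL w hw
    ext v
    simp only [Set.mem_inter_iff, Set.mem_setOf_eq, Set.mem_diff, Set.mem_singleton_iff,
      Set.mem_empty_iff_false, iff_false, not_and, not_not]
    intro hσwv hvL
    by_contra hvw
    have hne : w ≠ v := fun e => hvw e.symm
    rcases h w v (Or.inl hσwv) hne with hρ | hρ
    · have := hL w hw
      have hmem : v ∈ ({v | (w, v) ∈ ρ} ∩ (L \ {w}) : Set (List A)) := ⟨hρ, hvL, hvw⟩
      rw [this] at hmem
      exact hmem
    · have := hL v hvL
      have hmem : w ∈ ({u | (v, u) ∈ ρ} ∩ (L \ {v}) : Set (List A)) := ⟨hρ, hw, hne⟩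
      rw [this] at hmem
      exact hmem
end

section
/- Let ρ be an input-preserving word relation over Σ. Then a language L is error-detecting for ρ if and only if the relation ρ ∩ (L × L) is functional, i.e., for all words x, y, z, if (x, y) ∈ ρ, (x, z) ∈ ρ and x, y, z ∈ L, then y = z. (Correctness of the error-detection satisfaction test via transducer functionality.) -/
/-- A word relation is input-preserving if `(w, w) ∈ ρ` whenever `ρ(w) ≠ ∅`. -/
def InputPreserving {A : Type*} (ρ : Set (List A × List A)) : Prop :=
  ∀ w : List A, {v | (w, v) ∈ ρ}.Nonempty → (w, w) ∈ ρ

/-- For an input-preserving relation `ρ`, a language `L` is error-detecting for `ρ`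
iff the relation `ρ ∩ (L × L)` is functional. -/
theorem errorDetecting_iff_functional {A : Type*}
    (ρ : Set (List A × List A)) (L : Set (List A)) (hρ : InputPreserving ρ) :
    ErrorDetecting ρ L ↔
      ∀ x y z : List A, (x, y) ∈ ρ → (x, z) ∈ ρ → x ∈ L → y ∈ L → z ∈ L → y = z := by
  constructor
  · intro hED x y z hxy hxz hx hy hz
    have hy' : y = x := by
      by_contra h
      have := hED x hx
      exact Set.eq_empty_iff_forall_notMem.mp this y ⟨hxy, hy, h⟩
    have hz' : z = x := by
      by_contra h
      have := hED x hx
      exact Set.eq_empty_iff_forall_notMem.mp this z ⟨hxz, hz, h⟩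
    rw [hy', hz']
  · intro hf w hw
    ext v
    simp only [Set.mem_inter_iff, Set.mem_setOf_eq, Set.mem_diff, Set.mem_singleton_iff,
      Set.mem_empty_iff_false, iff_false, not_and, and_imp]
    intro hwv hv hne
    exact hne (hf w v w hwv (hρ w ⟨v, hwv⟩) hw hv hw)
end

section
/- Let ρ be an input-altering word relation over Σ and let L be a language with ρ(L) ∩ L = ∅ (i.e., L satisfies the input-altering transducer property described by ρ). Then for every word w ∉ L: the language L ∪ {w} satisfies ρ(L ∪ {w}) ∩ (L ∪ {w}) = ∅ if and only if w ∉ ρ(L) ∪ ρ⁻¹(L). Consequently, for any language M, L is maximal within M (there is no w ∈ M \ L with L ∪ {w} satisfying the property) if and only if M \ (L ∪ ρ(L) ∪ ρ⁻¹(L)) = ∅. (Correctness of the maximality test and non-maximality witness for input-altering transducer properties.) -/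
/-- The image `ρ(L)` of a language under a word relation. -/
def RelImage {A : Type*} (ρ : Set (List A × List A)) (L : Set (List A)) : Set (List A) :=
  {v | ∃ u ∈ L, (u, v) ∈ ρ}

/-- A word relation is input-altering if `w ∉ ρ(w)` for every word `w`. -/
def InputAltering {A : Type*} (ρ : Set (List A × List A)) : Prop :=
  ∀ w : List A, (w, w) ∉ ρ

/-- Maximality test for input-altering transducer properties: if `ρ` is
input-altering and `ρ(L) ∩ L = ∅`, then for `w ∉ L` the language `L ∪ {w}`
satisfies the property iff `w ∉ ρ(L) ∪ ρ⁻¹(L)`; consequently `L` is maximal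
within `M` iff `M \ (L ∪ ρ(L) ∪ ρ⁻¹(L)) = ∅`. -/
theorem inputAltering_maximality {A : Type*}
    (ρ : Set (List A × List A)) (L : Set (List A))
    (hρ : InputAltering ρ) (hL : RelImage ρ L ∩ L = ∅) :
    (∀ w : List A, w ∉ L →
      (RelImage ρ (L ∪ {w}) ∩ (L ∪ {w}) = ∅ ↔
        w ∉ RelImage ρ L ∪ RelImage (RelInv ρ) L)) ∧
    (∀ M : Set (List A),
      (¬ ∃ w ∈ M \ L, RelImage ρ (L ∪ {w}) ∩ (L ∪ {w}) = ∅) ↔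
        M \ (L ∪ RelImage ρ L ∪ RelImage (RelInv ρ) L) = ∅) := by
  have key : ∀ w : List A, w ∉ L →
      (RelImage ρ (L ∪ {w}) ∩ (L ∪ {w}) = ∅ ↔
        w ∉ RelImage ρ L ∪ RelImage (RelInv ρ) L) := by
    intro w hw
    constructor
    · intro h hmem
      rcases hmem with h1 | h2
      · -- w ∈ ρ(L), so w ∈ ρ(L∪{w}) ∩ (L∪{w})
        have : w ∈ RelImage ρ (L ∪ {w}) ∩ (L ∪ {w}) := by
          refine ⟨?_, Or.inr rfl⟩
          rcases h1 with ⟨u, hu, hur⟩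
          exact ⟨u, Or.inl hu, hur⟩
        rw [h] at this; exact this
      · -- w ∈ ρ⁻¹(L): ∃ u ∈ L, (w,u) ∈ ρ, so u ∈ ρ(L∪{w}) ∩ (L∪{w})
        rcases h2 with ⟨u, hu, hur⟩
        have : u ∈ RelImage ρ (L ∪ {w}) ∩ (L ∪ {w}) :=
          ⟨⟨w, Or.inr rfl, hur⟩, Or.inl hu⟩
        rw [h] at this; exact this
    · intro hn
      ext v
      simp only [Set.mem_inter_iff, Set.mem_empty_iff_false, iff_false]
      rintro ⟨⟨u, hu, hur⟩, hv⟩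
      rcases hu with hu | hu
      · rcases hv with hv | hv
        · have : v ∈ RelImage ρ L ∩ L := ⟨⟨u, hu, hur⟩, hv⟩
          rw [hL] at this; exact this
        · exact hn (Or.inl ⟨u, hu, by rw [hv] at hur; exact hur⟩)
      · rcases hv with hv | hv
        · -- u = w, v ∈ L : w ∈ ρ⁻¹(L)
          exact hn (Or.inr ⟨v, hv, by rw [hu] at hur; exact hur⟩)
        · -- u = w, v = w : input-altering
          rw [hu, hv] at hur
          exact hρ w hur
  refine ⟨key, fun M => ?_⟩
  constructor
  · intro h
    ext w
    simp only [Set.mem_diff, Set.mem_union, Set.mem_empty_iff_false, iff_false]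
    rintro ⟨hM, hne⟩
    push_neg at hne
    obtain ⟨⟨hwL, hρL⟩, hρinv⟩ := hne
    exact h ⟨w, ⟨hM, hwL⟩, (key w hwL).2 (by
      rintro (h1 | h2)
      exacts [hρL h1, hρinv h2])⟩
  · rintro h ⟨w, ⟨hM, hwL⟩, hprop⟩
    have := (key w hwL).1 hprop
    have hw : w ∈ M \ (L ∪ RelImage ρ L ∪ RelImage (RelInv ρ) L) := by
      refine ⟨hM, ?_⟩
      rintro ((h1 | h2) | h3)
      exacts [hwL h1, this (Or.inl h2), this (Or.inr h3)]
    rw [h] at hw; exact hw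
end

section
/- Let ρ be an input-preserving word relation over Σ and let L be a language that is error-detecting for ρ. Then for every word w ∉ L: the language L ∪ {w} is error-detecting for ρ if and only if w ∉ ρ(L) ∪ ρ⁻¹(L). Consequently, for any language M, L is maximal within M as an error-detecting language for ρ (there is no w ∈ M \ L with L ∪ {w} error-detecting for ρ) if and only if M \ (L ∪ ρ(L) ∪ ρ⁻¹(L)) = ∅. (Correctness of the maximality test and non-maximality witness for error-detecting properties.) -/
/-- Maximality test for error-detecting properties: if `ρ` is input-preserving
and `L` is error-detecting for `ρ`, then for `w ∉ L` the language `L ∪ {w}` is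
error-detecting for `ρ` iff `w ∉ ρ(L) ∪ ρ⁻¹(L)`; consequently `L` is maximal
within `M` iff `M \ (L ∪ ρ(L) ∪ ρ⁻¹(L)) = ∅`. -/
theorem errorDetecting_maximality {A : Type*}
    (ρ : Set (List A × List A)) (L : Set (List A))
    (hρ : InputPreserving ρ) (hL : ErrorDetecting ρ L) :
    (∀ w : List A, w ∉ L →
      (ErrorDetecting ρ (L ∪ {w}) ↔ w ∉ RelImage ρ L ∪ RelImage (RelInv ρ) L)) ∧
    (∀ M : Set (List A),
      (¬ ∃ w ∈ M \ L, ErrorDetecting ρ (L ∪ {w})) ↔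
        M \ (L ∪ RelImage ρ L ∪ RelImage (RelInv ρ) L) = ∅) := by

  have main : ∀ w : List A, w ∉ L →
      (ErrorDetecting ρ (L ∪ {w}) ↔ w ∉ RelImage ρ L ∪ RelImage (RelInv ρ) L) := by
    intro w hw
    constructor
    · intro hED hmem
      rcases hmem with ⟨u, hu, huw⟩ | ⟨u, hu, huw⟩
      · have := hED u (Or.inl hu)
        have : w ∈ ({v | (u, v) ∈ ρ} ∩ ((L ∪ {w}) \ {u}) : Set (List A)) :=
          ⟨huw, Or.inr rfl, fun h => hw (h ▸ hu)⟩
        rw [hED u (Or.inl hu)] at this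
        exact this
      · have : u ∈ ({v | (w, v) ∈ ρ} ∩ ((L ∪ {w}) \ {w}) : Set (List A)) :=
          ⟨huw, Or.inl hu, fun h => hw (h ▸ hu)⟩
        rw [hED w (Or.inr rfl)] at this
        exact this
    · intro hnot u hu
      ext v
      simp only [Set.mem_inter_iff, Set.mem_setOf_eq, Set.mem_diff, Set.mem_union,
        Set.mem_singleton_iff, Set.mem_empty_iff_false, iff_false, not_and, and_imp]
      rcases hu with hu | hu
      · intro hv hvm hvne
        rcases hvm with hvL | hvw
        · have := hL u hu
          have hvmem : v ∈ ({v | (u, v) ∈ ρ} ∩ (L \ {u}) : Set (List A)) := ⟨hv, hvL, hvne⟩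
          rw [this] at hvmem; exact hvmem
        · exact hnot (Or.inl ⟨u, hu, hvw ▸ hv⟩)
      · subst hu
        intro hv hvm hvne
        rcases hvm with hvL | hvw
        · exact hnot (Or.inr ⟨v, hvL, hv⟩)
        · exact hvne hvw
  refine ⟨main, fun M => ?_⟩
  constructor
  · intro hno
    ext w
    simp only [Set.mem_diff, Set.mem_union, Set.mem_empty_iff_false, iff_false, not_and, not_not]
    intro hwM
    by_contra hc
    push_neg at hc
    obtain ⟨⟨h1, h2⟩, h3⟩ := hc
    exact hno ⟨w, ⟨hwM, h1⟩,
      (main w h1).mpr (by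
        simp only [Set.mem_union]
        rintro (h | h)
        · exact h2 h
        · exact h3 h)⟩
  · rintro hempty ⟨w, ⟨hwM, hwL⟩, hED⟩
    have := (main w hwL).mp hED
    have hwmem : w ∈ M \ (L ∪ RelImage ρ L ∪ RelImage (RelInv ρ) L) := by
      refine ⟨hwM, ?_⟩
      rintro ((h | h) | h)
      · exact hwL h
      · exact this (Or.inl h)
      · exact this (Or.inr h)
    rw [hempty] at hwmem
    exact hwmem
end

section
/- Over the two-letter alphabet {a, b} (a ≠ b), the language L = {a, ab, ba} is not a uniquely decodable (UD) code, since the two distinct sequences (a, ba) and (ab, a) of L-words have the same concatenation aba; however, every nonempty subset of L with fewer than 3 elements is a UD code. Hence the UD code property is not a 3-independence. (Remark 3.) -/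
/-- A language `L` is a uniquely decodable (UD) code: any two sequences of
`L`-words with the same concatenation are identical. -/
def IsUDCode {A : Type*} (L : Set (List A)) : Prop :=
  ∀ us vs : List (List A), (∀ u ∈ us, u ∈ L) → (∀ v ∈ vs, v ∈ L) →
    us.flatten = vs.flatten → us = vs

/-- A prefix-free language (with no empty word) is a UD code. -/
lemma isUDCode_of_prefixFree {A : Type*} (L : Set (List A)) (hne : ∀ u ∈ L, u ≠ [])
    (hpf : ∀ u ∈ L, ∀ v ∈ L, u <+: v → u = v) : IsUDCode L := by
  intro us
  induction us with
  | nil =>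
    intro vs _ hv h
    cases vs with
    | nil => rfl
    | cons v vs =>
      exfalso
      simp only [List.flatten_nil, List.flatten_cons] at h
      have hv0 : v = [] := (List.append_eq_nil_iff.mp h.symm).1
      exact hne v (hv v (by simp)) hv0
  | cons u us ih =>
    intro vs hu hv h
    cases vs with
    | nil =>
      exfalso
      simp only [List.flatten_nil, List.flatten_cons] at h
      have hu0 : u = [] := (List.append_eq_nil_iff.mp h).1
      exact hne u (hu u (by simp)) hu0
    | cons v vs =>
      simp only [List.flatten_cons] at h
      have huv : u <+: v ∨ v <+: u :=
        List.prefix_or_prefix_of_prefix ⟨us.flatten, h⟩ ⟨vs.flatten, rfl⟩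
      have huL := hu u (by simp)
      have hvL := hv v (by simp)
      have heq : u = v := by
        rcases huv with h' | h'
        · exact hpf u huL v hvL h'
        · exact (hpf v hvL u huL h').symm
      subst heq
      have h2 : us.flatten = vs.flatten := List.append_cancel_left h
      have := ih vs (fun x hx => hu x (by simp [hx])) (fun x hx => hv x (by simp [hx])) h2
      rw [this]

/-- A suffix-free language (with no empty word) is a UD code. -/
lemma isUDCode_of_suffixFree {A : Type*} (L : Set (List A)) (hne : ∀ u ∈ L, u ≠ [])
    (hsf : ∀ u ∈ L, ∀ v ∈ L, u <:+ v → u = v) : IsUDCode L := by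
  intro us vs hu hv h
  set M : Set (List A) := {w | w.reverse ∈ L} with hM
  have hMne : ∀ u ∈ M, u ≠ [] := by
    intro u huM h0
    exact hne u.reverse huM (by simp [h0])
  have hMpf : ∀ u ∈ M, ∀ v ∈ M, u <+: v → u = v := by
    intro u huM v hvM hpre
    have : u.reverse <:+ v.reverse := by
      rw [List.reverse_suffix]; exact hpre
    exact List.reverse_injective (hsf _ huM _ hvM this)
  have key := isUDCode_of_prefixFree M hMne hMpf
    ((us.map List.reverse).reverse) ((vs.map List.reverse).reverse)
    (by intro u huM; simp only [List.mem_reverse, List.mem_map] at huM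
        obtain ⟨x, hx, rfl⟩ := huM; simpa [hM] using hu x hx)
    (by intro v hvM; simp only [List.mem_reverse, List.mem_map] at hvM
        obtain ⟨x, hx, rfl⟩ := hvM; simpa [hM] using hv x hx)
    (by rw [← List.reverse_flatten, ← List.reverse_flatten, h])
  exact List.map_injective_iff.mpr List.reverse_injective (List.reverse_injective key)

/-- Over `{a, b}` with `a ≠ b`, the language `L = {a, ab, ba}` is not a UD code
(the distinct sequences `(a, ba)` and `(ab, a)` have the same concatenation `aba`),
but every nonempty subset of `L` with fewer than 3 elements is a UD code.
Hence the UD code property is not a 3-independence. -/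
theorem udCode_not_three_independence {A : Type*} (a b : A) (hab : a ≠ b) :
    ¬ IsUDCode ({[a], [a, b], [b, a]} : Set (List A)) ∧
    ([[a], [b, a]] ≠ [[a, b], [a]] ∧
      ([[a], [b, a]] : List (List A)).flatten = ([[a, b], [a]] : List (List A)).flatten ∧
      (∀ u ∈ ([[a], [b, a]] : List (List A)), u ∈ ({[a], [a, b], [b, a]} : Set (List A))) ∧
      (∀ v ∈ ([[a, b], [a]] : List (List A)), v ∈ ({[a], [a, b], [b, a]} : Set (List A)))) ∧
    (∀ L' : Set (List A), L' ⊆ {[a], [a, b], [b, a]} → L'.Nonempty →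
      L'.Finite → L'.ncard < 3 → IsUDCode L') := by
  refine ⟨?_, ⟨by simp, by simp, by simp, by simp⟩, ?_⟩
  · intro h
    have := h [[a], [b, a]] [[a, b], [a]] (by simp) (by simp) (by simp)
    simp at this
  · intro L' hsub hne hfin hcard
    by_cases hab' : [a, b] ∈ L'
    · by_cases hba : [b, a] ∈ L'
      · -- then [a] ∉ L'
        by_cases ha : [a] ∈ L'
        · exfalso
          have hsub' : ({[a], [a, b], [b, a]} : Set (List A)) ⊆ L' := by
            intro x hx
            rcases hx with rfl | rfl | rfl
            · exact ha
            · exact hab'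
            · exact hba
          have h3 : ({[a], [a, b], [b, a]} : Set (List A)).ncard = 3 := by
            rw [Set.ncard_insert_of_notMem (by simp [hab]),
                Set.ncard_insert_of_notMem (by simp [hab]), Set.ncard_singleton]
          have := Set.ncard_le_ncard hsub' hfin
          omega
        · -- L' ⊆ {[a,b],[b,a]} : prefix-free
          apply isUDCode_of_prefixFree
          · intro u hu
            rcases hsub hu with rfl | rfl | rfl <;> simp_all
          · intro u hu v hv hpre
            have hu' : u = [a, b] ∨ u = [b, a] := by
              rcases hsub hu with rfl | rfl | rfl <;> simp_all
            have hv' : v = [a, b] ∨ v = [b, a] := by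
              rcases hsub hv with rfl | rfl | rfl <;> simp_all
            rcases hu' with rfl | rfl <;> rcases hv' with rfl | rfl <;>
              first
                | rfl
                | (exfalso; obtain ⟨t, ht⟩ := hpre; simp at ht; exact hab ht.1.symm)
                | (exfalso; obtain ⟨t, ht⟩ := hpre; simp at ht; exact hab ht.1)
      · -- [b,a] ∉ L' : L' ⊆ {[a],[a,b]} : suffix-free
        apply isUDCode_of_suffixFree
        · intro u hu
          rcases hsub hu with rfl | rfl | rfl <;> simp_all
        · intro u hu v hv hsuf
          have hu' : u = [a] ∨ u = [a, b] := by
            rcases hsub hu with rfl | rfl | rfl <;> simp_all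
          have hv' : v = [a] ∨ v = [a, b] := by
            rcases hsub hv with rfl | rfl | rfl <;> simp_all
          rcases hu' with rfl | rfl <;> rcases hv' with rfl | rfl
          · rfl
          · exfalso
            obtain ⟨t, ht⟩ := hsuf
            rcases t with _ | ⟨x, _ | ⟨y, t⟩⟩ <;> simp_all
          · exfalso
            obtain ⟨t, ht⟩ := hsuf
            have := congrArg List.length ht
            simp at this
          · rfl
    · -- [a,b] ∉ L' : L' ⊆ {[a],[b,a]} : prefix-free
      apply isUDCode_of_prefixFree
      · intro u hu
        rcases hsub hu with rfl | rfl | rfl <;> simp_all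
      · intro u hu v hv hpre
        have hu' : u = [a] ∨ u = [b, a] := by
          rcases hsub hu with rfl | rfl | rfl <;> simp_all
        have hv' : v = [a] ∨ v = [b, a] := by
          rcases hsub hv with rfl | rfl | rfl <;> simp_all
        rcases hu' with rfl | rfl <;> rcases hv' with rfl | rfl
        · rfl
        · exfalso
          obtain ⟨t, ht⟩ := hpre
          simp at ht
          exact hab ht.1
        · exfalso
          obtain ⟨t, ht⟩ := hpre
          have := congrArg List.length ht
          simp at this
        · rfl
end

section
/- Let n be a positive integer and let P be a set of languages over Σ that is an n-independence, i.e., for every language L: L ∈ P if and only if every nonempty subset L' ⊆ L with fewer than n elements belongs to P. Then every language L ∈ P is contained in a P-maximal language, i.e., there exists M ∈ P with L ⊆ M such that M ∪ {w} ∉ P for every word w ∉ M. -/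
/-- Every language satisfying an `n`-independence property `P` is contained in a
`P`-maximal language: if for every language `L`, `L ∈ P` iff every nonempty
subset of `L` with fewer than `n` elements is in `P`, then every `L ∈ P`
extends to some `M ∈ P` with `M ∪ {w} ∉ P` for all words `w ∉ M`. -/
theorem independence_maximal_extension {A : Type*} (n : ℕ) (hn : 0 < n)
    (P : Set (Set (List A)))
    (hP : ∀ L : Set (List A),
      L ∈ P ↔ ∀ L' : Set (List A), L' ⊆ L → L'.Nonempty → L'.Finite → L'.ncard < n → L' ∈ P) :
    ∀ L ∈ P, ∃ M ∈ P, L ⊆ M ∧ ∀ w : List A, w ∉ M → M ∪ {w} ∉ P := by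
  intro L hL
  obtain ⟨M, hLM, hmax⟩ := zorn_subset_nonempty {M | M ∈ P ∧ L ⊆ M}
    (fun c hc hchain hne => by
      refine ⟨⋃₀ c, ⟨?_, ?_⟩, fun s hs => Set.subset_sUnion_of_mem hs⟩
      · rw [hP]
        intro L' hL' hne' hfin hlt
        have : (hfin.toFinset : Set (List A)) ⊆ ⋃ i ∈ c, i := by
          rw [Set.biUnion_eq_iUnion, ← Set.sUnion_eq_iUnion]
          simpa [hfin.coe_toFinset] using hL'
        obtain ⟨i, hic, hi⟩ := DirectedOn.exists_mem_subset_of_finset_subset_biUnion hne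
          (hchain.directedOn) this
        rw [hfin.coe_toFinset] at hi
        exact (hP i).mp (hc hic).1 L' hi hne' hfin hlt
      · obtain ⟨s, hs⟩ := hne
        exact (hc hs).2.trans (Set.subset_sUnion_of_mem hs))
    L ⟨hL, subset_rfl⟩
  refine ⟨M, hmax.prop.1, hLM, fun w hw hWP => hw ?_⟩
  have h := hmax.eq_of_le (y := M ∪ {w}) ⟨hWP, hLM.trans Set.subset_union_left⟩
    Set.subset_union_left
  rw [h]; exact Set.mem_union_right _ rfl
end

section
/- Let B be an alphabet, let a, b be two distinct letters, and let (u_1,…,u_p) and (v_1,…,v_p) be two sequences of p nonempty words over B. In the monoid of pairs of words under componentwise concatenation, define U = {(ab^i, u_i) | 1 ≤ i ≤ p}, V = {(ab^i, v_i) | 1 ≤ i ≤ p}, C = {ab^i | 1 ≤ i ≤ p}, D = {(x, x) | x ∈ C⁺} ∪ {(x, x) | x ∈ aaB⁺}, X = (ε, aa)·U⁺ ∪ D, and Y = ((C⁺ × aaB⁺) \ (ε, aa)·V⁺) ∪ D, where R⁺ denotes the set of nonempty finite products of elements of R and (ε, aa)·R = {(x, aa y) | (x, y) ∈ R}. Then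 U⁺ ∩ V⁺ = ∅ if and only if X ∪ X⁻¹ ⊆ Y ∪ Y⁻¹. (Claim C3 in the proof of Lemma 4, which reduces the Post Correspondence Problem to containment of the symmetrized relations.) -/
/-- Product of a list of pairs of words in the monoid of pairs of words under
componentwise concatenation. -/
def pairListProd {Γ : Type*} (l : List (List Γ × List Γ)) : List Γ × List Γ :=
  ((l.map Prod.fst).flatten, (l.map Prod.snd).flatten)

/-- `R⁺`: the set of products of one or more elements of a set `R` of pairs of words. -/
def relPlus {Γ : Type*} (R : Set (List Γ × List Γ)) : Set (List Γ × List Γ) :=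
  {x | ∃ l : List (List Γ × List Γ), l ≠ [] ∧ (∀ r ∈ l, r ∈ R) ∧ x = pairListProd l}

/-- `K⁺`: concatenations of one or more words of a language `K`. -/
def langPlus {Γ : Type*} (K : Set (List Γ)) : Set (List Γ) :=
  {w | ∃ l : List (List Γ), l ≠ [] ∧ (∀ x ∈ l, x ∈ K) ∧ w = l.flatten}

/-- The inverse of a set of pairs of words. -/
def relInv {Γ : Type*} (R : Set (List Γ × List Γ)) : Set (List Γ × List Γ) :=
  {r | (r.2, r.1) ∈ R}

/-- `(ε, aa)·R = {(x, aay) | (x, y) ∈ R}`. -/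
def shiftAA {Γ : Type*} (a : Γ) (R : Set (List Γ × List Γ)) : Set (List Γ × List Γ) :=
  {r | ∃ q ∈ R, r = (q.1, a :: a :: q.2)}

/-- `B⁺`: nonempty words over the sub-alphabet `B`. -/
def wordsPlus {Γ : Type*} (B : Set Γ) : Set (List Γ) :=
  {w | w ≠ [] ∧ ∀ c ∈ w, c ∈ B}

lemma flatten_wordsPlus {Γ : Type*} (B : Set Γ) (l : List (List Γ)) (h1 : l ≠ [])
    (h2 : ∀ x ∈ l, x ∈ wordsPlus B) : l.flatten ∈ wordsPlus B := by
  match l, h1 with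
  | x :: xs, _ =>
    refine ⟨?_, ?_⟩
    · have hx := h2 x (List.mem_cons_self ..)
      simp only [List.flatten_cons]
      intro h
      exact hx.1 (List.append_eq_nil_iff.mp h).1
    · intro c hc
      rw [List.mem_flatten] at hc
      obtain ⟨y, hy, hcy⟩ := hc
      exact (h2 y hy).2 c hcy

lemma langC_shape {Γ : Type*} (a b : Γ) (p : ℕ) (w : List Γ)
    (hw : w ∈ langPlus {w : List Γ | ∃ i : Fin p, w = a :: List.replicate (i.val + 1) b}) :
    ∃ r, w = a :: b :: r := by
  obtain ⟨l, hne, hmem, rfl⟩ := hw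
  match l, hne with
  | x :: xs, _ =>
    obtain ⟨i, rfl⟩ := hmem x (List.mem_cons_self ..)
    exact ⟨List.replicate i.val b ++ xs.flatten, by simp [List.replicate_succ]⟩

/-- Claim C3 in the proof of Lemma 4: with `U = {(ab^i, u_i)}`, `V = {(ab^i, v_i)}`,
`C = {ab^i | 1 ≤ i ≤ p}`, `D = diag(C⁺) ∪ diag(aaB⁺)`, `X = (ε,aa)U⁺ ∪ D` and
`Y = ((C⁺ × aaB⁺) \ (ε,aa)V⁺) ∪ D`, one has
`U⁺ ∩ V⁺ = ∅` iff `X ∪ X⁻¹ ⊆ Y ∪ Y⁻¹`. -/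
theorem pcp_reduction_claim {Γ : Type*} (B : Set Γ) (a b : Γ) (hab : a ≠ b)
    (p : ℕ) (hp : 0 < p) (u v : Fin p → List Γ)
    (hu : ∀ i, u i ∈ wordsPlus B) (hv : ∀ i, v i ∈ wordsPlus B) :
    let U : Set (List Γ × List Γ) :=
      {r | ∃ i : Fin p, r = (a :: List.replicate (i.val + 1) b, u i)}
    let V : Set (List Γ × List Γ) :=
      {r | ∃ i : Fin p, r = (a :: List.replicate (i.val + 1) b, v i)}
    let C : Set (List Γ) := {w | ∃ i : Fin p, w = a :: List.replicate (i.val + 1) b}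
    let aaBplus : Set (List Γ) := {w | ∃ x ∈ wordsPlus B, w = a :: a :: x}
    let D : Set (List Γ × List Γ) :=
      {r | ∃ x ∈ langPlus C, r = (x, x)} ∪ {r | ∃ x ∈ aaBplus, r = (x, x)}
    let X : Set (List Γ × List Γ) := shiftAA a (relPlus U) ∪ D
    let Y : Set (List Γ × List Γ) :=
      ({r | r.1 ∈ langPlus C ∧ r.2 ∈ aaBplus} \ shiftAA a (relPlus V)) ∪ D
    (relPlus U ∩ relPlus V = ∅) ↔ (X ∪ relInv X ⊆ Y ∪ relInv Y) := by
  intro U V C aaBplus D X Y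
  -- components of elements of relPlus U
  have hU_comp : ∀ r ∈ relPlus U, r.1 ∈ langPlus C ∧ r.2 ∈ wordsPlus B := by
    rintro r ⟨l, hne, hmem, rfl⟩
    constructor
    · refine ⟨l.map Prod.fst, by simpa using hne, ?_, rfl⟩
      intro x hx
      rw [List.mem_map] at hx
      obtain ⟨q, hq, rfl⟩ := hx
      obtain ⟨i, hi⟩ := hmem q hq
      exact ⟨i, by rw [hi]⟩
    · apply flatten_wordsPlus B
      · simpa using hne
      · intro x hx
        rw [List.mem_map] at hx
        obtain ⟨q, hq, rfl⟩ := hx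
        obtain ⟨i, hi⟩ := hmem q hq
        rw [hi]
        exact hu i
  constructor
  · -- forward direction
    intro hemp
    have hXY : X ⊆ Y := by
      intro r hr
      have hr' : r ∈ shiftAA a (relPlus U) ∪ D := hr
      rcases hr' with h | h
      · obtain ⟨q, hq, rfl⟩ := h
        left
        constructor
        · refine ⟨(hU_comp q hq).1, ⟨q.2, (hU_comp q hq).2, rfl⟩⟩
        · rintro ⟨q', hq', heq⟩
          have h1 : q'.1 = q.1 := (Prod.mk.injEq _ _ _ _).mp heq.symm |>.1
          have h2 : q'.2 = q.2 := by
            have := (Prod.mk.injEq _ _ _ _).mp heq.symm |>.2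
            exact (List.cons_injective (List.cons_injective this))
          have hq'' : q ∈ relPlus V := by
            have : q' = q := Prod.ext h1 h2
            rwa [this] at hq'
          exact Set.eq_empty_iff_forall_notMem.mp hemp q ⟨hq, hq''⟩
      · exact Or.inr h
    intro r hr
    rcases hr with h | h
    · exact Or.inl (hXY h)
    · exact Or.inr (hXY h)
  · -- backward direction
    intro hsub
    rw [Set.eq_empty_iff_forall_notMem]
    rintro r ⟨hrU, hrV⟩
    have hr1 : ∃ t, r.1 = a :: b :: t := langC_shape a b p r.1 (hU_comp r hrU).1
    obtain ⟨t, ht⟩ := hr1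
    -- the shifted pair
    have hsX : ((r.1, a :: a :: r.2) : List Γ × List Γ) ∈ X :=
      Or.inl ⟨r, hrU, rfl⟩
    have hs := hsub (Or.inl hsX)
    have hne1 : r.1 ≠ a :: a :: r.2 := by
      rw [ht]; intro h
      have h2 := (List.cons_eq_cons.mp h).2
      exact hab ((List.cons_eq_cons.mp h2).1).symm
    have hnC : (a :: a :: r.2) ∉ langPlus C := by
      intro h
      obtain ⟨t', ht'⟩ := langC_shape a b p _ h
      have h2 := (List.cons_eq_cons.mp ht').2
      exact hab (List.cons_eq_cons.mp h2).1
    rcases hs with h | h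
    · have h' : ((r.1, a :: a :: r.2) : List Γ × List Γ) ∈
        ({r : List Γ × List Γ | r.1 ∈ langPlus C ∧ r.2 ∈ aaBplus} \ shiftAA a (relPlus V)) ∪ D := h
      rcases h' with ⟨_, hnot⟩ | hd
      · exact hnot ⟨r, hrV, rfl⟩
      · rcases hd with ⟨x, _, hx⟩ | ⟨x, _, hx⟩ <;>
        · have h1 := ((Prod.mk.injEq _ _ _ _).mp hx).1
          have h2 := ((Prod.mk.injEq _ _ _ _).mp hx).2
          exact hne1 (h1.trans h2.symm)
    · have h' : ((a :: a :: r.2, r.1) : List Γ × List Γ) ∈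
        ({r : List Γ × List Γ | r.1 ∈ langPlus C ∧ r.2 ∈ aaBplus} \ shiftAA a (relPlus V)) ∪ D := h
      rcases h' with ⟨⟨hC1, _⟩, _⟩ | hd
      · exact hnC hC1
      · rcases hd with ⟨x, _, hx⟩ | ⟨x, _, hx⟩ <;>
        · have h1 := ((Prod.mk.injEq _ _ _ _).mp hx).1
          have h2 := ((Prod.mk.injEq _ _ _ _).mp hx).2
          exact hne1 (h2.trans h1.symm)
end
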